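/- Let (y₀, p₀) ∈ ℝ × ℝ satisfy p₀²/2 + (1/2)(y₀² - 2y₀) < 0. Then there exists a unique differentiable function (y, p) : ℝ → ℝ × ℝ defined on all of ℝ with y(0) = y₀, p(0) = p₀ solving y'(t) = -p(t)·y(t), p'(t) = y(t)² - y(t); moreover the solution remains for all time in the compact set {(y, p) : p² + (y - 1)² ≤ 1 + 2H} where H = p₀²/2 + (1/2)(y₀² - 2y₀). -/

import Mathlib

/-!
The quantity `p² + (y - 1)² = 1 + 2H` is conserved along solutions, so every solution stays in a
compact sublevel set of it, on which the (smooth) vector field is Lipschitz; this gives uniqueness.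
For existence, the substitution `z = 1/y`, `w = p/y` turns the system restricted to the energy
level `H` into the forced harmonic oscillator `z' = w`, `w' = 1 - ε z` with `ε = -2H > 0`, which is
solved by trigonometric functions for all time. On that level the oscillator's own conserved
quantity reads `2 z = w² + ε z² + 1`, so `z` never vanishes and `(1/z, w/z)` is a global solution.
-/

open Set

theorem HasDerivAt.fst {𝕜 E F : Type*} [NontriviallyNormedField 𝕜] [NormedAddCommGroup E]
    [NormedSpace 𝕜 E] [NormedAddCommGroup F] [NormedSpace 𝕜 F] {f : 𝕜 → E × F} {f' : E × F}
    {x : 𝕜} (h : HasDerivAt f f' x) : HasDerivAt (fun x => (f x).1) f'.1 x :=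
  (ContinuousLinearMap.fst 𝕜 E F).hasFDerivAt.comp_hasDerivAt x h

theorem HasDerivAt.snd {𝕜 E F : Type*} [NontriviallyNormedField 𝕜] [NormedAddCommGroup E]
    [NormedSpace 𝕜 E] [NormedAddCommGroup F] [NormedSpace 𝕜 F] {f : 𝕜 → E × F} {f' : E × F}
    {x : 𝕜} (h : HasDerivAt f f' x) : HasDerivAt (fun x => (f x).2) f'.2 x :=
  (ContinuousLinearMap.snd 𝕜 E F).hasFDerivAt.comp_hasDerivAt x h

theorem ODE_solution_unique_univ_of_isCompact {E : Type*} [NormedAddCommGroup E]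
    [NormedSpace ℝ E] {v : E → E} (hv : ContDiff ℝ 1 v) {s : Set E} (hs : IsCompact s)
    {f g : ℝ → E} (hf : ∀ t, HasDerivAt f (v (f t)) t ∧ f t ∈ s)
    (hg : ∀ t, HasDerivAt g (v (g t)) t ∧ g t ∈ s) {t₀ : ℝ} (heq : f t₀ = g t₀) : f = g := by
  obtain ⟨K, hK⟩ := hv.locallyLipschitz.locallyLipschitzOn.exists_lipschitzOnWith_of_compact hs
  exact ODE_solution_unique_univ (v := fun _ => v) (s := fun _ => s) (fun _ => hK) hf hg heq

def morseField (x : ℝ × ℝ) : ℝ × ℝ := (-x.2 * x.1, x.1 ^ 2 - x.1)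

def IsMorseSolution (f : ℝ → ℝ × ℝ) : Prop := ∀ t, HasDerivAt f (morseField (f t)) t

/-- `1 + 2H` for the Hamiltonian `H(y, p) = p²/2 + (y² - 2y)/2`. -/
def morseEnergy (x : ℝ × ℝ) : ℝ := x.2 ^ 2 + (x.1 - 1) ^ 2

theorem contDiff_morseField : ContDiff ℝ 1 morseField := by
  unfold morseField
  fun_prop

theorem isCompact_morseEnergy_le (c : ℝ) : IsCompact {x | morseEnergy x ≤ c} := by
  refine (isCompact_closedBall ((1 : ℝ), (0 : ℝ)) ((c + 1) / 2)).of_isClosed_subset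
    (isClosed_le (by unfold morseEnergy; fun_prop) continuous_const) fun x hx => ?_
  simp only [mem_ofPred_eq, morseEnergy] at hx
  simp only [Metric.mem_closedBall, Prod.dist_eq, Real.dist_eq, sub_zero, max_le_iff]
  constructor
  · nlinarith [sq_abs (x.1 - 1), sq_nonneg (|x.1 - 1| - 1), sq_nonneg x.2]
  · nlinarith [sq_abs x.2, sq_nonneg (|x.2| - 1), sq_nonneg (x.1 - 1)]

namespace IsMorseSolution

variable {f g : ℝ → ℝ × ℝ}

theorem morseEnergy_eq (hf : IsMorseSolution f) (t : ℝ) :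
    morseEnergy (f t) = morseEnergy (f 0) := by
  have hderiv : ∀ s, HasDerivAt (fun s => morseEnergy (f s)) 0 s := fun s => by
    refine (((hf s).snd.pow 2).add (((hf s).fst.sub_const 1).pow 2)).congr_deriv ?_
    simp only [morseField]
    ring
  exact is_const_of_deriv_eq_zero (fun s => (hderiv s).differentiableAt)
    (fun s => (hderiv s).deriv) t 0

theorem eq_of_apply_zero_eq (hf : IsMorseSolution f) (hg : IsMorseSolution g)
    (h : f 0 = g 0) : f = g := by
  refine ODE_solution_unique_univ_of_isCompact contDiff_morseField
    (isCompact_morseEnergy_le (morseEnergy (f 0))) (fun t => ⟨hf t, ?_⟩) (fun t => ⟨hg t, ?_⟩) h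
  · exact (hf.morseEnergy_eq t).le
  · rw [mem_ofPred_eq, hg.morseEnergy_eq, h]

end IsMorseSolution

section Oscillator

variable {ε : ℝ} {z w : ℝ → ℝ}

theorem exists_oscillator (hε : 0 < ε) (z₀ w₀ : ℝ) :
    ∃ z w : ℝ → ℝ, (∀ t, HasDerivAt z (w t) t) ∧ (∀ t, HasDerivAt w (1 - ε * z t) t) ∧
      z 0 = z₀ ∧ w 0 = w₀ := by
  set ω := √ε
  have hω : ω ^ 2 = ε := Real.sq_sqrt hε.le
  have hω0 : ω ≠ 0 := (Real.sqrt_pos.mpr hε).ne'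
  set a := z₀ - 1 / ε
  have hlin (t : ℝ) : HasDerivAt (fun t => ω * t) ω t := by
    simpa using (hasDerivAt_id t).const_mul ω
  refine ⟨fun t => 1 / ε + a * Real.cos (ω * t) + w₀ / ω * Real.sin (ω * t),
    fun t => w₀ * Real.cos (ω * t) - ω * a * Real.sin (ω * t), fun t => ?_, fun t => ?_, ?_, ?_⟩
  · refine (((hasDerivAt_const t (1 / ε)).add ((hlin t).cos.const_mul a)).add
      ((hlin t).sin.const_mul (w₀ / ω))).congr_deriv ?_
    field_simp
    ring
  · refine (((hlin t).cos.const_mul w₀).sub ((hlin t).sin.const_mul (ω * a))).congr_deriv ?_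
    rw [← hω]
    field_simp
    ring
  · simp [a]
  · simp

theorem oscillator_invariant_eq (hz : ∀ t, HasDerivAt z (w t) t)
    (hw : ∀ t, HasDerivAt w (1 - ε * z t) t) (t : ℝ) :
    w t ^ 2 + ε * z t ^ 2 - 2 * z t = w 0 ^ 2 + ε * z 0 ^ 2 - 2 * z 0 := by
  have hderiv : ∀ s, HasDerivAt (fun s => w s ^ 2 + ε * z s ^ 2 - 2 * z s) 0 s := fun s => by
    refine ((((hw s).pow 2).add (((hz s).pow 2).const_mul ε)).sub
      ((hz s).const_mul 2)).congr_deriv ?_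
    ring
  exact is_const_of_deriv_eq_zero (fun s => (hderiv s).differentiableAt)
    (fun s => (hderiv s).deriv) t 0

theorem isMorseSolution_of_oscillator (hε : 0 ≤ ε) (hz : ∀ t, HasDerivAt z (w t) t)
    (hw : ∀ t, HasDerivAt w (1 - ε * z t) t) (h₀ : w 0 ^ 2 + ε * z 0 ^ 2 - 2 * z 0 + 1 = 0) :
    IsMorseSolution fun t => ((z t)⁻¹, w t / z t) := by
  intro t
  have hinv : w t ^ 2 + ε * z t ^ 2 - 2 * z t + 1 = 0 := by
    rw [oscillator_invariant_eq hz hw t]; exact h₀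
  have hpos : 0 < z t := by nlinarith [sq_nonneg (w t), sq_nonneg (z t)]
  refine (((hz t).inv hpos.ne').prodMk ((hw t).div (hz t) hpos.ne')).congr_deriv ?_
  simp only [morseField, Prod.mk.injEq]
  constructor
  · field_simp
  · field_simp
    linear_combination -hinv

end Oscillator

theorem exists_isMorseSolution {y₀ p₀ : ℝ} (h : morseEnergy (y₀, p₀) < 1) :
    ∃ f, IsMorseSolution f ∧ f 0 = (y₀, p₀) := by
  set ε := 1 - morseEnergy (y₀, p₀) with hε_def
  have hε : 0 < ε := by linarith
  simp only [morseEnergy] at hε_def h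
  have hy₀ : y₀ ≠ 0 := by rintro rfl; nlinarith
  obtain ⟨z, w, hz, hw, hz0, hw0⟩ := exists_oscillator hε y₀⁻¹ (p₀ / y₀)
  refine ⟨_, isMorseSolution_of_oscillator hε.le hz hw ?_, ?_⟩
  · rw [hz0, hw0, hε_def]
    field_simp
    ring
  · simp [hz0, hw0, hy₀]

/-- For negative energy `H = p₀²/2 + (1/2)(y₀² - 2y₀) < 0`, the transformed Morse
system `y' = -p y`, `p' = y² - y` with initial data `(y₀, p₀)` has a unique
globally defined differentiable solution, and every such solution remains in the
compact set `{(y, p) : p² + (y - 1)² ≤ 1 + 2H}`. -/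
theorem transformed_morse_global_existence_unique
    (y₀ p₀ : ℝ) (hH : p₀ ^ 2 / 2 + (1 / 2) * (y₀ ^ 2 - 2 * y₀) < 0) :
    (∃! f : ℝ → ℝ × ℝ,
        (∀ t : ℝ, HasDerivAt f (-(f t).2 * (f t).1, (f t).1 ^ 2 - (f t).1) t) ∧
        f 0 = (y₀, p₀)) ∧
    ∀ f : ℝ → ℝ × ℝ,
      ((∀ t : ℝ, HasDerivAt f (-(f t).2 * (f t).1, (f t).1 ^ 2 - (f t).1) t) ∧
        f 0 = (y₀, p₀)) →
      ∀ t : ℝ, (f t).2 ^ 2 + ((f t).1 - 1) ^ 2 ≤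
        1 + 2 * (p₀ ^ 2 / 2 + (1 / 2) * (y₀ ^ 2 - 2 * y₀)) := by
  have hE : morseEnergy (y₀, p₀) = 1 + 2 * (p₀ ^ 2 / 2 + (1 / 2) * (y₀ ^ 2 - 2 * y₀)) := by
    simp only [morseEnergy]
    ring
  obtain ⟨f, hf, hf0⟩ := exists_isMorseSolution (y₀ := y₀) (p₀ := p₀) (by linarith)
  refine ⟨⟨f, ⟨hf, hf0⟩, fun g ⟨hg, hg0⟩ => ?_⟩, fun g ⟨hg, hg0⟩ t => ?_⟩
  · exact IsMorseSolution.eq_of_apply_zero_eq hg hf (hg0.trans hf0.symm)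
  · have hconst := IsMorseSolution.morseEnergy_eq hg t
    rw [hg0, hE] at hconst
    exact hconst.le
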